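/- arXiv:1711.02818 — 3 statements merged into one kernel-verified Lean document; each statement's English description precedes it below -/
import Mathlib

section
/- For a real number x and nonnegative integers n and m with n ≥ 2m, define T(x,n,m) = ∏_{i=0}^{m-1} (x+i)_{n-2i} with (y)_k the rising factorial. If (x)_m ≠ 0 and T(x,n,m) ≠ 0, then T(x+1,n,m)/T(x,n,m) = (x+n-m+1)_m/(x)_m. -/
open Finset

/-- The Pochhammer symbol (rising factorial) `(y)_k = y(y+1)⋯(y+k-1)`. -/
def poch (y : ℝ) (k : ℕ) : ℝ := ∏ j ∈ Finset.range k, (y + j)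

/-- The skipped Pochhammer symbol `[y]_k = y(y+2)⋯(y+2(k-1))`. -/
def spoch (y : ℝ) (k : ℕ) : ℝ := ∏ j ∈ Finset.range k, (y + 2 * j)

/-- The trapezoidal product `T(x,n,m) = ∏_{i=0}^{m-1} (x+i)_{n-2i}`. -/
def trapT (x : ℝ) (n m : ℕ) : ℝ := ∏ i ∈ Finset.range m, poch (x + i) (n - 2 * i)

/-- The trapezoidal product `V(x,n,m) = ∏_{i=0}^{m-1} [x+2i]_{n-2i}`. -/
def trapV (x : ℝ) (n m : ℕ) : ℝ := ∏ i ∈ Finset.range m, spoch (x + 2 * i) (n - 2 * i)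

lemma poch_succ_shift (y : ℝ) (k : ℕ) : y * poch (y + 1) k = poch y k * (y + k) := by
  have h1 : poch y (k + 1) = poch y k * (y + k) := by
    simp [poch, Finset.prod_range_succ]
  have h2 : poch y (k + 1) = y * poch (y + 1) k := by
    rw [poch, Finset.prod_range_succ']
    simp only [Nat.cast_zero, add_zero]
    rw [mul_comm]
    congr 1
    rw [poch]
    apply Finset.prod_congr rfl
    intro j _
    push_cast
    ring
  rw [← h1, ← h2]

theorem trapT_shift_div (x : ℝ) (n m : ℕ) (h : 2 * m ≤ n)
    (hp : poch x m ≠ 0) (hT : trapT x n m ≠ 0) :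
    trapT (x + 1) n m / trapT x n m = poch (x + n - m + 1) m / poch x m := by
  have hA : poch (x + n - m + 1) m = ∏ i ∈ Finset.range m, (x + n - i) := by
    rw [poch, ← Finset.prod_range_reflect]
    apply Finset.prod_congr rfl
    intro j hj
    rw [Finset.mem_range] at hj
    have hj1 : (1 : ℕ) ≤ m := by omega
    have : ((m - 1 - j : ℕ) : ℝ) = (m : ℝ) - 1 - j := by
      push_cast [Nat.cast_sub (by omega : j ≤ m - 1), Nat.cast_sub hj1]
      ring
    rw [this]; ring
  have key : trapT (x + 1) n m * poch x m = poch (x + n - m + 1) m * trapT x n m := by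
    rw [hA, trapT, trapT, poch, ← Finset.prod_mul_distrib, ← Finset.prod_mul_distrib]
    apply Finset.prod_congr rfl
    intro i hi
    rw [Finset.mem_range] at hi
    have hle : 2 * i ≤ n := by omega
    have hcast : ((n - 2 * i : ℕ) : ℝ) = (n : ℝ) - 2 * i := by
      push_cast [Nat.cast_sub hle]; ring
    have := poch_succ_shift (x + i) (n - 2 * i)
    have harg : x + 1 + (i : ℝ) = (x + i) + 1 := by ring
    rw [harg, mul_comm (poch ((x + i) + 1) (n - 2 * i)) (x + i), this, hcast]
    ring
  rw [div_eq_div_iff hT hp]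
  linarith [key]
end

section
/- For a real number x and nonnegative integers n and m with n ≥ 2m, define [y]_k = ∏_{j=0}^{k-1}(y+2j) and V(x,n,m) = ∏_{i=0}^{m-1}[x+2i]_{n-2i}. If [x]_m ≠ 0 and V(x,n,m) ≠ 0, then V(x+2,n,m)/V(x,n,m) = [x+2n-2m+2]_m/[x]_m. -/
open Finset

lemma spoch_key (y : ℝ) (k : ℕ) : spoch (y + 2) k * y = spoch y k * (y + 2 * k) := by
  have h1 : spoch y (k+1) = spoch (y+2) k * y := by
    rw [spoch, Finset.prod_range_succ', spoch]
    congr 1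
    · exact Finset.prod_congr rfl fun j _ => by push_cast; ring
    · norm_num
  have h2 : spoch y (k+1) = spoch y k * (y + 2 * k) := by
    rw [spoch, Finset.prod_range_succ, spoch]
  rw [← h1, h2]

theorem trapV_shift_div (x : ℝ) (n m : ℕ) (h : 2 * m ≤ n)
    (hp : spoch x m ≠ 0) (hV : trapV x n m ≠ 0) :
    trapV (x + 2) n m / trapV x n m = spoch (x + 2 * n - 2 * m + 2) m / spoch x m := by
  rw [div_eq_div_iff hV hp]
  have hprod : ∀ i ∈ Finset.range m,
      spoch (x + 2 + 2 * (i:ℕ)) (n - 2 * i) * (x + 2 * (i:ℕ))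
        = spoch (x + 2 * (i:ℕ)) (n - 2 * i) * (x + 2 * n - 2 * i) := by
    intro i hi
    have him := Finset.mem_range.mp hi
    have hi' : 2 * i ≤ n := by omega
    have e1 : x + 2 + 2 * (i:ℝ) = (x + 2 * (i:ℝ)) + 2 := by ring
    rw [e1, spoch_key]
    congr 1
    rw [Nat.cast_sub hi']
    push_cast
    ring
  calc trapV (x + 2) n m * spoch x m
      = ∏ i ∈ Finset.range m,
          spoch (x + 2 + 2 * (i:ℕ)) (n - 2 * i) * (x + 2 * (i:ℕ)) := by
        rw [trapV, spoch, ← Finset.prod_mul_distrib]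
    _ = ∏ i ∈ Finset.range m,
          spoch (x + 2 * (i:ℕ)) (n - 2 * i) * (x + 2 * n - 2 * i) :=
        Finset.prod_congr rfl hprod
    _ = trapV x n m * ∏ i ∈ Finset.range m, (x + 2 * n - 2 * (i:ℕ)) := by
        rw [trapV, Finset.prod_mul_distrib]
    _ = spoch (x + 2 * n - 2 * m + 2) m * trapV x n m := by
        rw [mul_comm]
        congr 1
        rw [spoch, ← Finset.prod_range_reflect]
        refine Finset.prod_congr rfl fun j hj => ?_
        have hj' : j < m := Finset.mem_range.mp hj
        rw [Nat.cast_sub (by omega : j ≤ m - 1), Nat.cast_sub (by omega : 1 ≤ m)]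
        push_cast
        ring
end

section
/- For positive integers a, b, c with a ≤ b, Proctor's product ∏_{i=1}^{a} [ ∏_{j=1}^{b-a+1} (c+i+j-1)/(i+j-1) · ∏_{j=b-a+2}^{b-a+i} (2c+i+j-1)/(i+j-1) ] is a positive integer. -/
/-!
Writing each inner product as a ratio of factorials turns the product into `N / D` with
`N = ∏ t < a, (c + m + t)! (2c + m + 2t)! t!` and `D = ∏ t < a, (c + t)! (2c + m + t)! (m + 2t)!`,
where `m = b - a + 1`, so it suffices that `D ∣ N`. By Legendre's formula this follows from
Landau's criterion: for every `d > 0`, the sum of `⌊x / d⌋` over the arguments `x` of `D` is at most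
the same sum over the arguments of `N`. The difference of the two sums is a sum over `t < a` of
terms that do not change when `c`, `m` or `t` move by a multiple of `d`. So one may take `c, m < d`,
and the sum splits into full periods and one partial period, each of which is nonnegative by the
closed forms of `∑ t < k, ⌊(x + s t) / d⌋`.
-/

open Finset

/-- Proctor's product formula for the number of lozenge tilings of a halved hexagon. -/
def proctorProduct (a b c : ℕ) : ℚ :=
  ∏ i ∈ Finset.Icc 1 a,
    ((∏ j ∈ Finset.Icc 1 (b - a + 1), ((c : ℚ) + i + j - 1) / ((i : ℚ) + j - 1)) *
      ∏ j ∈ Finset.Icc (b - a + 2) (b - a + i), (2 * (c : ℚ) + i + j - 1) / ((i : ℚ) + j - 1))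

open Nat

theorem Nat.factorization_prod_factorial {ι : Type*} (s : Finset ι) (x : ι → ℕ) {p B : ℕ}
    (hp : p.Prime) (hB : ∀ i ∈ s, x i < B) :
    (∏ i ∈ s, (x i)!).factorization p = ∑ e ∈ Ico 1 B, ∑ i ∈ s, x i / p ^ e := by
  rw [Nat.factorization_prod fun i _ => (x i).factorial_ne_zero, Finset.sum_apply', sum_comm]
  exact sum_congr rfl fun i hi =>
    factorization_factorial hp ((log_le_self p (x i)).trans_lt (hB i hi))

/-- Landau's criterion. -/
theorem Nat.prod_factorial_dvd_prod_factorial {ι κ : Type*} (s : Finset ι) (t : Finset κ)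
    (x : ι → ℕ) (y : κ → ℕ) (h : ∀ d, 0 < d → ∑ i ∈ s, x i / d ≤ ∑ j ∈ t, y j / d) :
    ∏ i ∈ s, (x i)! ∣ ∏ j ∈ t, (y j)! := by
  rw [← factorization_le_iff_dvd (prod_ne_zero_iff.2 fun i _ => (x i).factorial_ne_zero)
    (prod_ne_zero_iff.2 fun j _ => (y j).factorial_ne_zero)]
  intro p
  by_cases hp : p.Prime
  · set B := ∑ i ∈ s, x i + ∑ j ∈ t, y j + 1
    rw [factorization_prod_factorial s x hp (B := B) fun i hi => by
        have := single_le_sum (fun i _ => Nat.zero_le (x i)) hi; omega,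
      factorization_prod_factorial t y hp (B := B) fun j hj => by
        have := single_le_sum (fun j _ => Nat.zero_le (y j)) hj; omega]
    exact sum_le_sum fun e _ => h _ (pow_pos hp.pos e)
  · simp [factorization_eq_zero_of_not_prime _ hp]

theorem Nat.div_eq_card_filter_range {d n y : ℕ} (hy : y < (n + 1) * d) :
    y / d = #{j ∈ range n | (j + 1) * d ≤ y} := by
  have hd : 0 < d := by rcases Nat.eq_zero_or_pos d with rfl | h <;> simp_all
  have hyn : y / d < n + 1 := (Nat.div_lt_iff_lt_mul hd).2 hy
  rw [← card_range (y / d)]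
  congr 1
  ext j
  simp only [mem_range, mem_filter, ← Nat.le_div_iff_mul_le hd]
  omega

theorem Nat.card_filter_range_le_add_mul {d s x k : ℕ} (hs : 0 < s) :
    #{t ∈ range k | d ≤ x + s * t} = k - (d - x + s - 1) / s := by
  rw [← card_Ico]
  congr 1
  ext t
  simp only [mem_range, mem_filter, mem_Ico, Nat.div_le_iff_le_mul_add_pred hs]
  omega

theorem Nat.sum_range_add_mul_div {d s x k n : ℕ} (hs : 0 < s) (h : x + s * k ≤ (n + 1) * d) :
    ∑ t ∈ range k, (x + s * t) / d = ∑ j ∈ range n, (k - ((j + 1) * d - x + s - 1) / s) := by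
  calc ∑ t ∈ range k, (x + s * t) / d
      = ∑ t ∈ range k, #{j ∈ range n | (j + 1) * d ≤ x + s * t} :=
        sum_congr rfl fun t ht => div_eq_card_filter_range (by
          have := mem_range.1 ht; nlinarith)
    _ = ∑ j ∈ range n, #{t ∈ range k | (j + 1) * d ≤ x + s * t} := by
        simp only [card_filter]; exact sum_comm
    _ = _ := sum_congr rfl fun j _ => card_filter_range_le_add_mul hs

theorem Function.Periodic.sum_range_mul_add {M : Type*} [AddCommMonoid M] {f : ℕ → M} {d : ℕ}
    (hf : Function.Periodic f d) (q k : ℕ) :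
    ∑ t ∈ range (d * q + k), f t = q • ∑ t ∈ range d, f t + ∑ t ∈ range k, f t := by
  induction q with
  | zero => simp
  | succ q ih =>
    have hf' (t : ℕ) : f (d + t) = f t := by rw [add_comm, hf]
    rw [show d * (q + 1) + k = d + (d * q + k) by ring, sum_range_add]
    simp only [hf', ih, succ_nsmul]
    abel

theorem prod_Ioc_natCast_add {K : Type*} [Field K] [CharZero K] {lo hi : ℕ} (y : ℕ)
    (h : lo ≤ hi) : ∏ j ∈ Ioc lo hi, ((y : K) + j) = (y + hi)! / (y + lo)! := by
  induction hi, h using Nat.le_induction with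
  | base => simp [(y + lo).factorial_ne_zero]
  | succ n hn ih =>
    rw [prod_Ioc_succ_top hn, ih, ← add_assoc, Nat.factorial_succ]
    push_cast
    field_simp
    ring

def proctorNum (a c m : ℕ) : ℕ := ∏ t ∈ range a, (c + m + t)! * (2 * c + m + 2 * t)! * t !

def proctorDen (a c m : ℕ) : ℕ := ∏ t ∈ range a, (c + t)! * (2 * c + m + t)! * (m + 2 * t)!

def floorDefect (d c m t : ℕ) : ℤ :=
  ((c + m + t) / d + (2 * c + m + 2 * t) / d + t / d : ℕ) -
    ((c + t) / d + (2 * c + m + t) / d + (m + 2 * t) / d : ℕ)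

theorem floorDefect_add_mul {d : ℕ} (hd : 0 < d) (c m t i j l : ℕ) :
    floorDefect d (c + d * i) (m + d * j) (t + d * l) = floorDefect d c m t := by
  have shift (x q : ℕ) : (x + d * q) / d = x / d + q := Nat.add_mul_div_left x q hd
  simp only [floorDefect]
  rw [show c + d * i + (m + d * j) + (t + d * l) = c + m + t + d * (i + j + l) by ring,
    show 2 * (c + d * i) + (m + d * j) + 2 * (t + d * l) =
      2 * c + m + 2 * t + d * (2 * i + j + 2 * l) by ring,
    show c + d * i + (t + d * l) = c + t + d * (i + l) by ring,
    show 2 * (c + d * i) + (m + d * j) + (t + d * l) = 2 * c + m + t + d * (2 * i + j + l) by ring,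
    show m + d * j + 2 * (t + d * l) = m + 2 * t + d * (j + 2 * l) by ring]
  simp only [shift]
  push_cast
  ring

theorem sum_range_floorDefect_nonneg_of_lt {d c m k : ℕ} (hc : c < d) (hm : m < d) (hk : k ≤ d) :
    0 ≤ ∑ t ∈ range k, floorDefect d c m t := by
  have e₁ := sum_range_add_mul_div (d := d) (x := c) (k := k) (n := 1) one_pos (by omega)
  have e₂ := sum_range_add_mul_div (d := d) (x := 2 * c + m) (k := k) (n := 3) one_pos (by omega)
  have e₃ := sum_range_add_mul_div (d := d) (x := m) (k := k) (n := 2) two_pos (by omega)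
  have e₄ := sum_range_add_mul_div (d := d) (x := c + m) (k := k) (n := 2) one_pos (by omega)
  have e₅ := sum_range_add_mul_div (d := d) (x := 2 * c + m) (k := k) (n := 4) two_pos (by omega)
  have e₆ := sum_range_add_mul_div (d := d) (x := 0) (k := k) (n := 0) one_pos (by omega)
  simp only [one_mul, zero_add, sum_range_succ, sum_range_zero, Nat.add_sub_cancel, Nat.div_one,
    Nat.reduceAdd] at e₁ e₂ e₃ e₄ e₅ e₆
  simp only [floorDefect, sum_sub_distrib, ← Nat.cast_sum, sum_add_distrib, e₁, e₂, e₃, e₄, e₅, e₆]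
  clear e₁ e₂ e₃ e₄ e₅ e₆
  push_cast
  -- `omega` alone gets lost in the truncated subtractions; removing those that vanish in each
  -- case lets it finish.
  rcases lt_or_ge (2 * c + m) d with h₁ | h₁ <;>
  rcases lt_or_ge (2 * c + m) (2 * d) with h₂ | h₂ <;>
  rcases lt_or_ge (c + m) d with h₃ | h₃ <;>
  simp (disch := omega) only [Nat.sub_eq_zero_of_le, Nat.sub_zero, Nat.zero_add, Nat.reduceDiv,
    Nat.cast_zero] <;>
  omega

theorem sum_range_floorDefect_nonneg {d : ℕ} (hd : 0 < d) (a c m : ℕ) :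
    0 ≤ ∑ t ∈ range a, floorDefect d c m t := by
  have hred (t : ℕ) : floorDefect d c m t = floorDefect d (c % d) (m % d) t := by
    simpa [Nat.mod_add_div] using floorDefect_add_mul hd (c % d) (m % d) t (c / d) (m / d) 0
  have hper : Function.Periodic (floorDefect d (c % d) (m % d)) d := fun t => by
    simpa using floorDefect_add_mul hd (c % d) (m % d) t 0 0 1
  have hc := Nat.mod_lt c hd
  have hm := Nat.mod_lt m hd
  simp only [hred]
  rw [← Nat.div_add_mod a d, hper.sum_range_mul_add]
  exact add_nonneg (nsmul_nonneg (sum_range_floorDefect_nonneg_of_lt hc hm le_rfl) _)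
    (sum_range_floorDefect_nonneg_of_lt hc hm (Nat.mod_lt a hd).le)

theorem proctorDen_dvd_proctorNum (a c m : ℕ) : proctorDen a c m ∣ proctorNum a c m := by
  have hsum (d : ℕ) (hd : 0 < d) :
      ∑ t ∈ range a, ((c + t) / d + (2 * c + m + t) / d + (m + 2 * t) / d) ≤
        ∑ t ∈ range a, ((c + m + t) / d + (2 * c + m + 2 * t) / d + t / d) := by
    have := sum_range_floorDefect_nonneg hd a c m
    simp only [floorDefect, sum_sub_distrib, ← Nat.cast_sum] at this
    omega
  have := Nat.prod_factorial_dvd_prod_factorial (range a ×ˢ univ) (range a ×ˢ univ)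
    (fun p : ℕ × Fin 3 => ![c + p.1, 2 * c + m + p.1, m + 2 * p.1] p.2)
    (fun p : ℕ × Fin 3 => ![c + m + p.1, 2 * c + m + 2 * p.1, p.1] p.2)
    fun d hd => by simpa [sum_product, Fin.sum_univ_three, add_assoc] using hsum d hd
  simpa [proctorNum, proctorDen, prod_product, Fin.prod_univ_three, mul_assoc] using this

theorem proctorProduct_eq_div (a b c : ℕ) :
    proctorProduct a b c = (proctorNum a c (b - a + 1) : ℚ) / proctorDen a c (b - a + 1) := by
  set m := b - a + 1
  rw [proctorProduct, proctorNum, proctorDen, ← Ico_add_one_right_eq_Icc, prod_Ico_eq_prod_range,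
    Nat.add_sub_cancel, Nat.cast_prod, Nat.cast_prod, ← prod_div_distrib]
  refine prod_congr rfl fun t _ => ?_
  have e₁ (j : ℕ) : (c : ℚ) + ↑(1 + t) + j - 1 = ↑(c + t) + j := by push_cast; ring
  have e₂ (j : ℕ) : 2 * (c : ℚ) + ↑(1 + t) + j - 1 = ↑(2 * c + t) + j := by push_cast; ring
  have e₃ (j : ℕ) : (↑(1 + t) : ℚ) + j - 1 = ↑t + j := by push_cast; ring
  rw [show Icc 1 m = Ioc 0 m from Icc_add_one_left_eq_Ioc 0 m,
    show Icc (b - a + 2) (b - a + (1 + t)) = Ioc m (m + t) by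
      rw [← Icc_add_one_left_eq_Ioc]; congr 1; omega]
  simp only [e₁, e₂, e₃, prod_div_distrib, prod_Ioc_natCast_add _ (Nat.zero_le m),
    prod_Ioc_natCast_add _ (Nat.le_add_right m t)]
  push_cast
  ring_nf
  field_simp

theorem proctorProduct_is_positive_integer_general (a b c : ℕ) :
    ∃ N : ℕ, 0 < N ∧ proctorProduct a b c = N := by
  set m := b - a + 1
  have hdvd := proctorDen_dvd_proctorNum a c m
  have hnum : 0 < proctorNum a c m := prod_pos fun t _ => by positivity
  have hden : 0 < proctorDen a c m := prod_pos fun t _ => by positivity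
  refine ⟨proctorNum a c m / proctorDen a c m, Nat.div_pos (Nat.le_of_dvd hnum hdvd) hden, ?_⟩
  rw [proctorProduct_eq_div, Nat.cast_div hdvd (by positivity)]

theorem proctorProduct_is_positive_integer (a b c : ℕ)
    (ha : 0 < a) (hb : 0 < b) (hc : 0 < c) (hab : a ≤ b) :
    ∃ N : ℕ, 0 < N ∧ proctorProduct a b c = N :=
  proctorProduct_is_positive_integer_general a b c
end
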